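/- arXiv:2303.05524 — 3 statements merged into one kernel-verified Lean document; each statement's English description precedes it below -/
import Mathlib

section
/- The sesquinormal function S_ν, defined for ν ∈ [0,∞) by S_ν(μ) := inf_{A ≥ Φ} T(A, Φ_{μ,ν}) where the infimum is over cdfs A pointwise dominating the standard normal cdf Φ, is itself a cumulative distribution function in μ: it is monotone non-decreasing, tends to 0 as μ → −∞, and tends to 1 as μ → +∞. -/
open Filter MeasureTheory ProbabilityTheory Set
open scoped NNReal

/-- Total variation distance between two measures on ℝ. -/
noncomputable def tvDist (P Q : Measure ℝ) : ℝ :=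
  ⨆ s : {s : Set ℝ // MeasurableSet s}, |(P s.1).toReal - (Q s.1).toReal|

/-- The standard normal cdf `Φ`. -/
noncomputable def stdPhi (x : ℝ) : ℝ := (gaussianReal 0 1 (Set.Iic x)).toReal

/-- The sesquinormal cdf `S_ν(μ)`: the infimum, over cdfs `A` dominating the standard
normal cdf `Φ` pointwise, of the total variation distance between the distribution
with cdf `A` and the normal distribution with mean `μ` and variance `ν`. -/
noncomputable def sesqui (ν : ℝ≥0) (μ : ℝ) : ℝ :=
  sInf {d : ℝ | ∃ A : StieltjesFunction ℝ,
    Tendsto (fun x => A x) atBot (nhds 0) ∧ Tendsto (fun x => A x) atTop (nhds 1) ∧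
    (∀ x, stdPhi x ≤ A x) ∧ d = tvDist A.measure (gaussianReal μ ν)}

/-!
Monotonicity: translating a cdf `A ≥ Φ` to the left keeps it above `Φ` and translates its
law, and total variation does not increase under a common measurable map.

Limit at `+∞`: testing the total variation on `Iic (μ/2)` gives
`S_ν(μ) ≥ Φ(μ/2) - N(μ,ν)(Iic (μ/2)) → 1`.

Limit at `-∞`: for independent `X ~ N(μ,ν)` and `Y ~ N(0,1)`, the law of `min X Y` has cdf
`≥ Φ`, and coupling gives `S_ν(μ) ≤ P(Y < X) ≤ Φ(μ/2) + N(μ,ν)(Ioi (μ/2)) → 0`.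
-/

open scoped Topology

instance : Nonempty {s : Set ℝ // MeasurableSet s} := ⟨⟨∅, MeasurableSet.empty⟩⟩

section TotalVariation

variable {P Q : Measure ℝ}

lemma tvDist_nonneg : 0 ≤ tvDist P Q := Real.iSup_nonneg fun _ => abs_nonneg _

lemma tvDist_le_of_forall {c : ℝ} (h : ∀ s, MeasurableSet s → |P.real s - Q.real s| ≤ c) :
    tvDist P Q ≤ c :=
  ciSup_le fun s => h s.1 s.2

variable [IsProbabilityMeasure P] [IsProbabilityMeasure Q]

lemma abs_measureReal_sub_le_one (s : Set ℝ) : |P.real s - Q.real s| ≤ 1 :=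
  abs_sub_le_of_nonneg_of_le measureReal_nonneg measureReal_le_one measureReal_nonneg
    measureReal_le_one

lemma tvDist_le_one : tvDist P Q ≤ 1 :=
  tvDist_le_of_forall fun s _ => abs_measureReal_sub_le_one s

lemma abs_measureReal_sub_le_tvDist {s : Set ℝ} (hs : MeasurableSet s) :
    |P.real s - Q.real s| ≤ tvDist P Q :=
  le_ciSup (f := fun s : {s : Set ℝ // MeasurableSet s} => |P.real s.1 - Q.real s.1|)
    ⟨1, by rintro _ ⟨s, rfl⟩; exact abs_measureReal_sub_le_one s.1⟩ ⟨s, hs⟩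

lemma tvDist_map_le {f : ℝ → ℝ} (hf : Measurable f) :
    tvDist (P.map f) (Q.map f) ≤ tvDist P Q :=
  tvDist_le_of_forall fun s hs => by
    simpa only [map_measureReal_apply hf hs] using abs_measureReal_sub_le_tvDist (hf hs)

end TotalVariation

lemma tvDist_map_le_measureReal_ne {Ω : Type*} [MeasurableSpace Ω] (ρ : Measure Ω)
    [IsFiniteMeasure ρ] {f g : Ω → ℝ} (hf : Measurable f) (hg : Measurable g) :
    tvDist (ρ.map f) (ρ.map g) ≤ ρ.real {ω | f ω ≠ g ω} := by
  refine tvDist_le_of_forall fun s hs => ?_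
  rw [map_measureReal_apply hf hs, map_measureReal_apply hg hs, abs_sub_le_iff]
  have cover (u v : Ω → ℝ) : ρ.real (u ⁻¹' s) ≤ ρ.real (v ⁻¹' s) + ρ.real {ω | u ω ≠ v ω} := by
    refine (measureReal_mono (fun ω hω => ?_) (measure_ne_top ρ _)).trans
      (measureReal_union_le _ _)
    by_cases h : u ω = v ω
    · exact Or.inl (by simpa [mem_preimage, ← h] using hω)
    · exact Or.inr h
  have hgf := cover g f
  rw [show {ω | g ω ≠ f ω} = {ω | f ω ≠ g ω} by simp only [ne_comm]] at hgf
  constructor <;> linarith [cover f g]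

section MinCoupling

variable (P Q : Measure ℝ) [IsProbabilityMeasure P] [IsProbabilityMeasure Q]

lemma measureReal_Iic_le_map_min (x : ℝ) :
    Q.real (Iic x) ≤ ((P.prod Q).map fun p => min p.1 p.2).real (Iic x) := by
  rw [map_measureReal_apply (by fun_prop) measurableSet_Iic]
  calc Q.real (Iic x) = (P.prod Q).real (univ ×ˢ Iic x) := by simp [measureReal_prod_prod]
    _ ≤ _ := measureReal_mono (fun p hp => show min p.1 p.2 ≤ x from min_le_of_right_le hp.2)
      (measure_ne_top _ _)

lemma tvDist_map_min_le (a : ℝ) :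
    tvDist ((P.prod Q).map fun p => min p.1 p.2) P ≤ Q.real (Iic a) + P.real (Ioi a) := by
  have hfst : (P.prod Q).map Prod.fst = P := by simp
  have hlt : {p : ℝ × ℝ | min p.1 p.2 ≠ p.1} ⊆ univ ×ˢ Iic a ∪ Ioi a ×ˢ univ := by
    intro p hp
    simp only [mem_ofPred_eq, ne_eq, min_eq_left_iff, not_le] at hp
    by_cases hpa : p.2 ≤ a
    · exact Or.inl ⟨trivial, hpa⟩
    · exact Or.inr ⟨(not_le.1 hpa).trans hp, trivial⟩
  calc tvDist ((P.prod Q).map fun p => min p.1 p.2) P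
      = tvDist ((P.prod Q).map fun p => min p.1 p.2) ((P.prod Q).map Prod.fst) := by rw [hfst]
    _ ≤ (P.prod Q).real {p | min p.1 p.2 ≠ p.1} :=
      tvDist_map_le_measureReal_ne _ (by fun_prop) measurable_fst
    _ ≤ (P.prod Q).real (univ ×ˢ Iic a) + (P.prod Q).real (Ioi a ×ˢ univ) :=
      (measureReal_mono hlt (measure_ne_top _ _)).trans (measureReal_union_le _ _)
    _ = Q.real (Iic a) + P.real (Ioi a) := by simp [measureReal_prod_prod]

end MinCoupling

lemma tendsto_measureReal_Ioi_atTop (P : Measure ℝ) [IsProbabilityMeasure P] :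
    Tendsto (fun x => P.real (Ioi x)) atTop (𝓝 0) := by
  have h := (tendsto_cdf_atTop P).const_sub (1 : ℝ)
  rw [sub_self] at h
  refine h.congr fun x => ?_
  rw [cdf_eq_real, ← probReal_compl_eq_one_sub measurableSet_Iic, compl_Iic]

lemma tendsto_measureReal_Iic_atBot (P : Measure ℝ) [IsProbabilityMeasure P] :
    Tendsto (fun x => P.real (Iic x)) atBot (𝓝 0) :=
  (tendsto_cdf_atBot P).congr fun x => cdf_eq_real P x

lemma gaussianReal_measureReal_Iic (μ : ℝ) (ν : ℝ≥0) (a : ℝ) :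
    (gaussianReal μ ν).real (Iic a) = (gaussianReal 0 ν).real (Iic (a - μ)) := by
  rw [← zero_add μ, ← gaussianReal_map_add_const,
    map_measureReal_apply (measurable_add_const μ) measurableSet_Iic, preimage_add_const_Iic,
    zero_add]

lemma gaussianReal_measureReal_Ioi (μ : ℝ) (ν : ℝ≥0) (a : ℝ) :
    (gaussianReal μ ν).real (Ioi a) = (gaussianReal 0 ν).real (Ioi (a - μ)) := by
  rw [← zero_add μ, ← gaussianReal_map_add_const,
    map_measureReal_apply (measurable_add_const μ) measurableSet_Ioi, preimage_add_const_Ioi,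
    zero_add]

lemma stdPhi_monotone : Monotone stdPhi := fun _ _ h => measureReal_mono (Iic_subset_Iic.2 h)

lemma tendsto_stdPhi_atBot : Tendsto stdPhi atBot (𝓝 0) :=
  tendsto_measureReal_Iic_atBot _

lemma tendsto_stdPhi_atTop : Tendsto stdPhi atTop (𝓝 1) :=
  (tendsto_cdf_atTop (gaussianReal 0 1)).congr fun x => cdf_eq_real _ x

lemma StieltjesFunction.stdPhi_le_measureReal_Iic {A : StieltjesFunction ℝ}
    (h0 : Tendsto A atBot (𝓝 0)) (hA : ∀ x, stdPhi x ≤ A x) (x : ℝ) :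
    stdPhi x ≤ A.measure.real (Iic x) := by
  have hnonneg : 0 ≤ A x := measureReal_nonneg.trans (hA x)
  rw [measureReal_def, A.measure_Iic h0, sub_zero, ENNReal.toReal_ofReal hnonneg]
  exact hA x

section Sesqui

variable {ν : ℝ≥0} {μ : ℝ}

lemma sesqui_le_tvDist (ρ : Measure ℝ) [IsProbabilityMeasure ρ]
    (hρ : ∀ x, stdPhi x ≤ ρ.real (Iic x)) : sesqui ν μ ≤ tvDist ρ (gaussianReal μ ν) :=
  csInf_le ⟨0, by rintro _ ⟨A, -, -, -, rfl⟩; exact tvDist_nonneg⟩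
    ⟨cdf ρ, tendsto_cdf_atBot ρ, tendsto_cdf_atTop ρ, fun x => (cdf_eq_real ρ x).symm ▸ hρ x,
      by rw [measure_cdf]⟩

lemma le_sesqui {c : ℝ} (h : ∀ A : StieltjesFunction ℝ, Tendsto A atBot (𝓝 0) →
    Tendsto A atTop (𝓝 1) → (∀ x, stdPhi x ≤ A x) → c ≤ tvDist A.measure (gaussianReal μ ν)) :
    c ≤ sesqui ν μ :=
  le_csInf ⟨_, cdf (gaussianReal 0 1), tendsto_cdf_atBot _, tendsto_cdf_atTop _,
      fun x => (cdf_eq_real _ x).ge, rfl⟩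
    (by rintro _ ⟨A, h0, h1, hA, rfl⟩; exact h A h0 h1 hA)

lemma sesqui_nonneg : 0 ≤ sesqui ν μ := le_sesqui fun _ _ _ _ => tvDist_nonneg

lemma sesqui_le_one : sesqui ν μ ≤ 1 :=
  (sesqui_le_tvDist (gaussianReal 0 1) fun _ => le_rfl).trans tvDist_le_one

end Sesqui

lemma sesqui_monotone (ν : ℝ≥0) : Monotone (sesqui ν) := by
  intro μ₁ μ₂ hμ
  refine le_sesqui fun A h0 h1 hA => ?_
  have := A.isProbabilityMeasure h0 h1
  have hsub : Measurable fun x : ℝ => x - (μ₂ - μ₁) := measurable_sub_const _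
  have := Measure.isProbabilityMeasure_map (μ := A.measure) hsub.aemeasurable
  have hshift : ∀ x, stdPhi x ≤ (A.measure.map fun x => x - (μ₂ - μ₁)).real (Iic x) := by
    intro x
    rw [map_measureReal_apply hsub measurableSet_Iic, preimage_sub_const_Iic]
    exact (stdPhi_monotone (by linarith)).trans (A.stdPhi_le_measureReal_Iic h0 hA _)
  calc sesqui ν μ₁ ≤ tvDist (A.measure.map fun x => x - (μ₂ - μ₁))
        ((gaussianReal μ₂ ν).map fun x => x - (μ₂ - μ₁)) := by
        rw [gaussianReal_map_sub_const, sub_sub_cancel]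
        exact sesqui_le_tvDist _ hshift
    _ ≤ tvDist A.measure (gaussianReal μ₂ ν) := tvDist_map_le hsub

lemma sesqui_le_stdPhi_add (ν : ℝ≥0) (μ a : ℝ) :
    sesqui ν μ ≤ stdPhi a + (gaussianReal 0 ν).real (Ioi (a - μ)) := by
  have := Measure.isProbabilityMeasure_map
    (μ := (gaussianReal μ ν).prod (gaussianReal 0 1)) (f := fun p => min p.1 p.2) (by fun_prop)
  rw [← gaussianReal_measureReal_Ioi]
  exact (sesqui_le_tvDist _ (measureReal_Iic_le_map_min _ _)).trans (tvDist_map_min_le _ _ a)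

lemma stdPhi_sub_le_sesqui (ν : ℝ≥0) (μ a : ℝ) :
    stdPhi a - (gaussianReal 0 ν).real (Iic (a - μ)) ≤ sesqui ν μ :=
  le_sesqui fun A h0 h1 hA => by
    have := A.isProbabilityMeasure h0 h1
    rw [← gaussianReal_measureReal_Iic]
    calc stdPhi a - (gaussianReal μ ν).real (Iic a)
        ≤ A.measure.real (Iic a) - (gaussianReal μ ν).real (Iic a) := by
          gcongr; exact A.stdPhi_le_measureReal_Iic h0 hA a
      _ ≤ tvDist A.measure (gaussianReal μ ν) :=
          (le_abs_self _).trans (abs_measureReal_sub_le_tvDist measurableSet_Iic)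

/-- For every `ν ∈ [0,∞)`, the sesquinormal function `μ ↦ S_ν(μ)` is itself a cdf:
monotone non-decreasing, tending to `0` at `−∞` and to `1` at `+∞`. -/
theorem sesqui_isCDF (ν : ℝ≥0) :
    Monotone (sesqui ν) ∧
    Tendsto (sesqui ν) atBot (nhds 0) ∧
    Tendsto (sesqui ν) atTop (nhds 1) := by
  have half_sub_bot : Tendsto (fun μ : ℝ => μ / 2 - μ) atBot atTop :=
    (tendsto_neg_atBot_atTop.comp (tendsto_id.atBot_div_const two_pos)).congr fun μ => by
      simp only [Function.comp_apply, id]; ring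
  have half_sub_top : Tendsto (fun μ : ℝ => μ / 2 - μ) atTop atBot :=
    (tendsto_neg_atTop_atBot.comp (tendsto_id.atTop_div_const two_pos)).congr fun μ => by
      simp only [Function.comp_apply, id]; ring
  refine ⟨sesqui_monotone ν, ?_, ?_⟩
  · have hupper : Tendsto (fun μ => stdPhi (μ / 2) + (gaussianReal 0 ν).real (Ioi (μ / 2 - μ)))
        atBot (𝓝 0) := by
      simpa using (tendsto_stdPhi_atBot.comp (tendsto_id.atBot_div_const two_pos)).add
        ((tendsto_measureReal_Ioi_atTop _).comp half_sub_bot)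
    exact tendsto_of_tendsto_of_tendsto_of_le_of_le tendsto_const_nhds hupper
      (fun _ => sesqui_nonneg) fun μ => sesqui_le_stdPhi_add ν μ (μ / 2)
  · have hlower : Tendsto (fun μ => stdPhi (μ / 2) - (gaussianReal 0 ν).real (Iic (μ / 2 - μ)))
        atTop (𝓝 1) := by
      simpa using (tendsto_stdPhi_atTop.comp (tendsto_id.atTop_div_const two_pos)).sub
        ((tendsto_measureReal_Iic_atBot _).comp half_sub_top)
    exact tendsto_of_tendsto_of_tendsto_of_le_of_le hlower tendsto_const_nhds
      (fun μ => stdPhi_sub_le_sesqui ν μ (μ / 2)) fun _ => sesqui_le_one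
end

section
/- Let ρ, σ be density operators on a finite-dimensional Hilbert space with σ of full support, and suppose ρ^{-1/2}σρ^{-1/2} has a non-degenerate maximal eigenvalue (ρ also full rank). Then for every x with 0 ≤ x ≤ λ_min(ρ), the optimal type-II hypothesis testing error satisfies 1 − β_x(ρ‖σ) = x · exp(−D_{−∞}(ρ‖σ)), where β_x(ρ‖σ) := min{Tr(σQ) : 0 ≤ Q ≤ 1, Tr(ρQ) ≥ 1 − x}, and D_{−∞}(ρ‖σ) := −log λ_max(ρ^{-1/2}σρ^{-1/2}). -/
open Matrix Filter
open scoped Matrix ComplexOrder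

variable {n : Type*} [Fintype n] [DecidableEq n]

/-- `ρ` is a density operator: positive semidefinite with unit trace. -/
def IsDensity (ρ : Matrix n n ℂ) : Prop := ρ.PosSemidef ∧ ρ.trace = 1

/-- Optimal type-II error `β_x(ρ‖σ)` in binary quantum hypothesis testing:
the minimum of `Tr(σQ)` over tests `0 ≤ Q ≤ 1` with `Tr(ρQ) ≥ 1 − x`. -/
noncomputable def betaErr (x : ℝ) (ρ σ : Matrix n n ℂ) : ℝ :=
  sInf {v : ℝ | ∃ Q : Matrix n n ℂ, Q.PosSemidef ∧ (1 - Q).PosSemidef ∧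
    1 - x ≤ ((ρ * Q).trace).re ∧ v = ((σ * Q).trace).re}

open Classical in
/-- Real power of a Hermitian matrix via the spectral decomposition. -/
noncomputable def hrpow (A : Matrix n n ℂ) (α : ℝ) : Matrix n n ℂ :=
  if h : A.IsHermitian then
    (h.eigenvectorUnitary : Matrix n n ℂ) *
      Matrix.diagonal (fun i => ((h.eigenvalues i ^ α : ℝ) : ℂ)) *
      star (h.eigenvectorUnitary : Matrix n n ℂ)
  else A

open Classical in
/-- Minimal eigenvalue of a Hermitian matrix. -/
noncomputable def lamMin (A : Matrix n n ℂ) : ℝ :=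
  if h : A.IsHermitian then ⨅ i, h.eigenvalues i else 0

open Classical in
/-- Maximal eigenvalue of a Hermitian matrix. -/
noncomputable def lamMax (A : Matrix n n ℂ) : ℝ :=
  if h : A.IsHermitian then ⨆ i, h.eigenvalues i else 0

open Classical in
/-- Pinching map `P_σ(X)` with respect to the eigenspaces of `σ`:
in the eigenbasis of `σ`, off-diagonal blocks between distinct eigenvalues are erased. -/
noncomputable def pinch (σ X : Matrix n n ℂ) : Matrix n n ℂ :=
  if h : σ.IsHermitian then
    (h.eigenvectorUnitary : Matrix n n ℂ) *
      (Matrix.of fun i j =>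
        if h.eigenvalues i = h.eigenvalues j then
          (star (h.eigenvectorUnitary : Matrix n n ℂ) * X *
            (h.eigenvectorUnitary : Matrix n n ℂ)) i j
        else 0) *
      star (h.eigenvectorUnitary : Matrix n n ℂ)
  else X

/-- Trace distance `T(A,B) = (1/2)‖A − B‖₁`. -/
noncomputable def traceDist (A B : Matrix n n ℂ) : ℝ :=
  (1 / 2) * ((((Matrix.posSemidef_conjTranspose_mul_self (A - B)).1.eigenvectorUnitary : Matrix n n ℂ) *
    Matrix.diagonal (fun i => ((Real.sqrt ((Matrix.posSemidef_conjTranspose_mul_self (A - B)).1.eigenvalues i) : ℝ) : ℂ)) *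
    (star (Matrix.posSemidef_conjTranspose_mul_self (A - B)).1.eigenvectorUnitary : Matrix n n ℂ)).trace).re

/-- `n`-fold tensor (Kronecker) power of a matrix. -/
noncomputable def tensorPow {d : ℕ} (ρ : Matrix (Fin d) (Fin d) ℂ) (m : ℕ) :
    Matrix (Fin m → Fin d) (Fin m → Fin d) ℂ :=
  fun f g => ∏ i, ρ (f i) (g i)

/-- A quantum channel from a `d₁`- to a `d₂`-dimensional system, presented by
Kraus operators (equivalently, a completely positive trace-preserving map). -/
structure QChannel (d₁ d₂ : ℕ) where
  k : ℕ
  K : Fin k → Matrix (Fin d₂) (Fin d₁) ℂ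
  tp : ∑ i, (K i)ᴴ * K i = 1

/-- Action of a quantum channel on a matrix. -/
noncomputable def QChannel.apply {d₁ d₂ : ℕ} (E : QChannel d₁ d₂)
    (X : Matrix (Fin d₁) (Fin d₁) ℂ) : Matrix (Fin d₂) (Fin d₂) ℂ :=
  ∑ i, E.K i * X * (E.K i)ᴴ

/-- Classical Rényi relative entropy of a (commuting) pair of matrices,
`D_α(A‖B) = (1/(α−1)) ln Tr(A^α B^{1−α})`. -/
noncomputable def renyiDiv (α : ℝ) (A B : Matrix n n ℂ) : ℝ :=
  (α - 1)⁻¹ * Real.log (((hrpow A α * hrpow B (1 - α)).trace).re)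

/-- Minimal (sandwiched) Rényi relative entropy, `α ≤ 1/2` branch:
`D̃_α(ρ‖σ) = (1/(α−1)) ln Tr((√σ ρ^{α/(1−α)} √σ)^{1−α})`. -/
noncomputable def minRenyiDiv (α : ℝ) (ρ σ : Matrix n n ℂ) : ℝ :=
  (α - 1)⁻¹ * Real.log
    (((hrpow (hrpow σ (1 / 2) * hrpow ρ (α / (1 - α)) * hrpow σ (1 / 2)) (1 - α)).trace).re)

/-! With `M = ρ^{-1/2} σ ρ^{-1/2}` and `λ = λ_max(M)`, conjugating `M ≤ λ` by `ρ^{1/2}` gives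
`σ ≤ λ ρ`; so a test with `Tr ρ(1 - Q) ≤ x` has `Tr σ(1 - Q) ≤ λ x`, i.e. `Tr σQ ≥ 1 - λ x`.
For a unit eigenvector `v` of `M` for `λ`, the test `Q = 1 - x ρ^{-1/2} v v* ρ^{-1/2}` attains
this bound; it satisfies `Q ≥ 0` exactly because `ρ ≥ x ≥ x v v*` when `x ≤ λ_min(ρ)`.
Hence `β_x(ρ‖σ) = 1 - x λ`, and `Tr σ ≤ λ Tr ρ` shows `λ ≥ 1`, so `exp (log λ) = λ`. -/

open scoped MatrixOrder

section

variable {ι : Type*} [Fintype ι]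

theorem Matrix.trace_mul_conj_vecMulVec (A T : Matrix ι ι ℂ) (v : ι → ℂ) :
    (A * (T * vecMulVec v (star v) * T)).trace = star v ⬝ᵥ (T * A * T) *ᵥ v := by
  rw [← Matrix.mul_assoc, trace_mul_comm, ← Matrix.mul_assoc, ← Matrix.mul_assoc,
    mul_vecMulVec, trace_vecMulVec, dotProduct_comm]

variable [DecidableEq ι]

theorem Matrix.PosSemidef.trace_mul_nonneg {A B : Matrix ι ι ℂ} (hA : A.PosSemidef)
    (hB : B.PosSemidef) : 0 ≤ (A * B).trace := by
  have hsqrt : (CFC.sqrt A).IsHermitian := (CFC.sqrt_nonneg A).isSelfAdjoint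
  rw [← CFC.sqrt_mul_sqrt_self A hA.nonneg, Matrix.mul_assoc, trace_mul_comm]
  nth_rw 2 [← hsqrt.eq]
  exact (hB.mul_mul_conjTranspose_same _).trace_nonneg

theorem Matrix.posSemidef_one_sub_vecMulVec_self_star {v : ι → ℂ} (hv : star v ⬝ᵥ v = 1) :
    (1 - vecMulVec v (star v)).PosSemidef := by
  set P := vecMulVec v (star v)
  have hP : P.IsHermitian := (posSemidef_vecMulVec_self_star v).1
  have hPP : P * P = P := by rw [vecMulVec_mul_vecMulVec, hv, one_smul]
  have h : 1 - P = (1 - P)ᴴ * (1 - P) := by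
    rw [(isHermitian_one.sub hP).eq, Matrix.mul_sub, Matrix.sub_mul, Matrix.sub_mul, hPP]
    simp
  rw [h]
  exact posSemidef_conjTranspose_mul_self _

theorem hrpow_eq_cfc {A : Matrix ι ι ℂ} (hA : A.IsHermitian) (α : ℝ) :
    hrpow A α = cfc (· ^ α : ℝ → ℝ) A := by
  rw [hA.cfc_eq, Matrix.IsHermitian.cfc, hrpow, dif_pos hA, Unitary.conjStarAlgAut_apply]
  rfl

theorem isHermitian_hrpow {A : Matrix ι ι ℂ} (hA : A.IsHermitian) (α : ℝ) :
    (hrpow A α).IsHermitian := by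
  rw [hrpow_eq_cfc hA]
  exact cfc_predicate _ A

theorem hrpow_zero {A : Matrix ι ι ℂ} (hA : A.IsHermitian) : hrpow A 0 = 1 := by
  simp only [hrpow_eq_cfc hA, Real.rpow_zero, cfc_const_one ℝ A]

theorem hrpow_one {A : Matrix ι ι ℂ} (hA : A.IsHermitian) : hrpow A 1 = A := by
  simp only [hrpow_eq_cfc hA, Real.rpow_one, cfc_id' ℝ A]

theorem hrpow_mul_hrpow {A : Matrix ι ι ℂ} (hA : A.PosDef) (a b : ℝ) :
    hrpow A a * hrpow A b = hrpow A (a + b) := by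
  have hpos : ∀ t ∈ spectrum ℝ A, 0 < t :=
    fun t ht => (isStrictlyPositive_iff_posDef.mpr hA).spectrum_pos ht
  simp only [hrpow_eq_cfc hA.1]
  rw [← cfc_mul _ _ A (A.finite_real_spectrum.continuousOn _)
    (A.finite_real_spectrum.continuousOn _)]
  exact cfc_congr fun t ht => (Real.rpow_add (hpos t ht) a b).symm

theorem hrpow_neg_half_mul_mul_hrpow_neg_half {ρ : Matrix ι ι ℂ} (hρ : ρ.PosDef) :
    hrpow ρ (-(1 / 2)) * ρ * hrpow ρ (-(1 / 2)) = 1 := by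
  nth_rw 2 [← hrpow_one hρ.1]
  rw [hrpow_mul_hrpow hρ, hrpow_mul_hrpow hρ]
  norm_num [hrpow_zero hρ.1]

theorem isHermitian_hrpow_mul_mul_hrpow {ρ σ : Matrix ι ι ℂ} (hρ : ρ.IsHermitian)
    (hσ : σ.IsHermitian) (α : ℝ) : (hrpow ρ α * σ * hrpow ρ α).IsHermitian := by
  simpa only [(isHermitian_hrpow hρ α).eq] using
    isHermitian_mul_mul_conjTranspose (hrpow ρ α) hσ

theorem eigenvalues_le_lamMax {A : Matrix ι ι ℂ} (hA : A.IsHermitian) (i : ι) :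
    hA.eigenvalues i ≤ lamMax A := by
  rw [lamMax, dif_pos hA]
  exact le_ciSup (Set.finite_range _).bddAbove i

theorem lamMin_le_eigenvalues {A : Matrix ι ι ℂ} (hA : A.IsHermitian) (i : ι) :
    lamMin A ≤ hA.eigenvalues i := by
  rw [lamMin, dif_pos hA]
  exact ciInf_le (Set.finite_range _).bddBelow i

theorem exists_eigenvalues_eq_lamMax [Nonempty ι] {A : Matrix ι ι ℂ} (hA : A.IsHermitian) :
    ∃ i, hA.eigenvalues i = lamMax A := by
  rw [lamMax, dif_pos hA]
  exact exists_eq_ciSup_of_finite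

theorem exists_unit_eigenvector_lamMax [Nonempty ι] {A : Matrix ι ι ℂ} (hA : A.IsHermitian) :
    ∃ v : ι → ℂ, star v ⬝ᵥ v = 1 ∧ A *ᵥ v = lamMax A • v := by
  obtain ⟨i, hi⟩ := exists_eigenvalues_eq_lamMax hA
  refine ⟨hA.eigenvectorBasis i, ?_, hi ▸ hA.mulVec_eigenvectorBasis i⟩
  rw [dotProduct_comm, ← EuclideanSpace.inner_eq_star_dotProduct]
  exact hA.eigenvectorBasis.inner_eq_one i

theorem posSemidef_lamMax_smul_one_sub {A : Matrix ι ι ℂ} (hA : A.IsHermitian) :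
    (lamMax A • (1 : Matrix ι ι ℂ) - A).PosSemidef := by
  have h : A ≤ algebraMap ℝ _ (lamMax A) := le_algebraMap_of_spectrum_le (by
    rw [hA.spectrum_real_eq_range_eigenvalues]
    rintro _ ⟨i, rfl⟩
    exact eigenvalues_le_lamMax hA i) hA.isSelfAdjoint
  rwa [Algebra.algebraMap_eq_smul_one] at h

theorem posSemidef_sub_smul_one_of_le_lamMin {A : Matrix ι ι ℂ} (hA : A.IsHermitian) {c : ℝ}
    (hc : c ≤ lamMin A) : (A - c • (1 : Matrix ι ι ℂ)).PosSemidef := by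
  have h : algebraMap ℝ _ c ≤ A := algebraMap_le_of_le_spectrum (by
    rw [hA.spectrum_real_eq_range_eigenvalues]
    rintro _ ⟨i, rfl⟩
    exact hc.trans (lamMin_le_eigenvalues hA i)) hA.isSelfAdjoint
  rwa [Algebra.algebraMap_eq_smul_one] at h

theorem exists_test_of_mulVec_eq_smul {ρ σ T : Matrix ι ι ℂ} (hρ : ρ.IsHermitian)
    (hT : T.IsHermitian) (hTρT : T * ρ * T = 1) {x : ℝ} (hx0 : 0 ≤ x) (hx : x ≤ lamMin ρ)
    {v : ι → ℂ} (hv : star v ⬝ᵥ v = 1) {μ : ℝ} (hμ : (T * σ * T) *ᵥ v = μ • v) :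
    ∃ Q : Matrix ι ι ℂ, Q.PosSemidef ∧ (1 - Q).PosSemidef ∧
      (ρ * Q).trace = ρ.trace - x ∧ (σ * Q).trace = σ.trace - x * μ := by
  set P := vecMulVec v (star v)
  have hTPT : (T * P * T).PosSemidef := by
    simpa only [hT.eq] using (posSemidef_vecMulVec_self_star v).mul_mul_conjTranspose_same T
  -- `1 - x T P T = T (ρ - x P) T` and `ρ - x P = (ρ - x) + x (1 - P)`
  have hQ : (1 - x • (T * P * T)).PosSemidef := by
    have hmid : (ρ - x • P).PosSemidef := by
      have h := (posSemidef_sub_smul_one_of_le_lamMin hρ hx).add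
        ((posSemidef_one_sub_vecMulVec_self_star hv).smul hx0)
      rwa [smul_sub, sub_add_sub_cancel] at h
    have h := hmid.mul_mul_conjTranspose_same T
    rwa [hT.eq, Matrix.mul_sub, Matrix.sub_mul, hTρT, Matrix.mul_smul, Matrix.smul_mul] at h
  refine ⟨1 - x • (T * P * T), hQ, by simpa using hTPT.smul hx0, ?_, ?_⟩
  · rw [Matrix.mul_sub, Matrix.mul_one, Matrix.mul_smul, trace_sub, trace_smul,
      trace_mul_conj_vecMulVec, hTρT, one_mulVec, hv]
    simp
  · rw [Matrix.mul_sub, Matrix.mul_one, Matrix.mul_smul, trace_sub, trace_smul,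
      trace_mul_conj_vecMulVec, hμ, dotProduct_smul, hv]
    simp

theorem posSemidef_lamMax_smul_sub {ρ σ : Matrix ι ι ℂ} (hρ : ρ.PosDef) (hσ : σ.IsHermitian) :
    (lamMax (hrpow ρ (-(1 / 2)) * σ * hrpow ρ (-(1 / 2))) • ρ - σ).PosSemidef := by
  set T := hrpow ρ (-(1 / 2))
  set S := hrpow ρ (1 / 2)
  have hST : S * T = 1 := by rw [hrpow_mul_hrpow hρ]; norm_num [hrpow_zero hρ.1]
  have hTS : T * S = 1 := by rw [hrpow_mul_hrpow hρ]; norm_num [hrpow_zero hρ.1]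
  have hSS : S * S = ρ := by rw [hrpow_mul_hrpow hρ]; norm_num [hrpow_one hρ.1]
  have hσ_eq : S * (T * σ * T) * S = σ := by
    rw [← Matrix.mul_assoc, ← Matrix.mul_assoc, hST, Matrix.one_mul, Matrix.mul_assoc, hTS,
      Matrix.mul_one]
  have h := (posSemidef_lamMax_smul_one_sub
    (isHermitian_hrpow_mul_mul_hrpow hρ.1 hσ (-(1 / 2)))).mul_mul_conjTranspose_same S
  rwa [(isHermitian_hrpow hρ.1 _).eq, Matrix.mul_sub, Matrix.sub_mul, hσ_eq, Matrix.mul_smul,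
    Matrix.smul_mul, Matrix.mul_one, hSS] at h

theorem re_trace_mul_le_lamMax_mul {ρ σ B : Matrix ι ι ℂ} (hρ : ρ.PosDef) (hσ : σ.IsHermitian)
    (hB : B.PosSemidef) :
    (σ * B).trace.re ≤ lamMax (hrpow ρ (-(1 / 2)) * σ * hrpow ρ (-(1 / 2))) * (ρ * B).trace.re := by
  have h := (Complex.nonneg_iff.mp ((posSemidef_lamMax_smul_sub hρ hσ).trace_mul_nonneg hB)).1
  rw [Matrix.sub_mul, trace_sub, Matrix.smul_mul, trace_smul] at h
  simp only [Complex.sub_re, Complex.real_smul, Complex.re_ofReal_mul] at h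
  linarith

theorem one_le_lamMax {ρ σ : Matrix ι ι ℂ} (hρ : ρ.PosDef) (hσ : σ.IsHermitian)
    (hρtr : ρ.trace = 1) (hσtr : σ.trace = 1) :
    1 ≤ lamMax (hrpow ρ (-(1 / 2)) * σ * hrpow ρ (-(1 / 2))) := by
  simpa [hρtr, hσtr] using re_trace_mul_le_lamMax_mul hρ hσ PosSemidef.one

theorem betaErr_eq_one_sub_mul_lamMax [Nonempty ι] {ρ σ : Matrix ι ι ℂ} (hρ : ρ.PosDef)
    (hσ : σ.IsHermitian) (hρtr : ρ.trace = 1) (hσtr : σ.trace = 1) {x : ℝ} (hx0 : 0 ≤ x)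
    (hx : x ≤ lamMin ρ) :
    betaErr x ρ σ = 1 - x * lamMax (hrpow ρ (-(1 / 2)) * σ * hrpow ρ (-(1 / 2))) := by
  obtain ⟨v, hv, hMv⟩ :=
    exists_unit_eigenvector_lamMax (isHermitian_hrpow_mul_mul_hrpow hρ.1 hσ (-(1 / 2)))
  obtain ⟨Q, hQ, hQ1, hρQ, hσQ⟩ := exists_test_of_mulVec_eq_smul hρ.1
    (isHermitian_hrpow hρ.1 _) (hrpow_neg_half_mul_mul_hrpow_neg_half hρ) hx0 hx hv hMv
  refine IsLeast.csInf_eq ⟨⟨Q, hQ, hQ1, ?_, ?_⟩, ?_⟩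
  · rw [hρQ, hρtr]
    simp
  · rw [hσQ, hσtr]
    simp
  · rintro _ ⟨Q, -, hQ1, hρQ, rfl⟩
    have h := re_trace_mul_le_lamMax_mul hρ hσ hQ1
    simp only [Matrix.mul_sub, Matrix.mul_one, trace_sub, hρtr, hσtr, Complex.sub_re,
      Complex.one_re] at h
    have hlam := one_le_lamMax hρ hσ hρtr hσtr
    nlinarith

end

theorem one_sub_betaErr_eq_general {d : ℕ} (hd : 0 < d) (ρ σ : Matrix (Fin d) (Fin d) ℂ)
    (hρ : ρ.PosDef) (hσ : σ.PosDef) (hρtr : ρ.trace = 1) (hσtr : σ.trace = 1)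
    (x : ℝ) (hx0 : 0 ≤ x) (hx : x ≤ lamMin ρ) :
    1 - betaErr x ρ σ =
      x * Real.exp (-(-(Real.log (lamMax (hrpow ρ (-(1 / 2)) * σ * hrpow ρ (-(1 / 2))))))) := by
  have : Nonempty (Fin d) := Fin.pos_iff_nonempty.mp hd
  rw [betaErr_eq_one_sub_mul_lamMax hρ hσ.1 hρtr hσtr hx0 hx, neg_neg,
    Real.exp_log (zero_lt_one.trans_le (one_le_lamMax hρ hσ.1 hρtr hσtr))]
  ring

/-- Single-shot extreme-deviation hypothesis testing, low-`x` branch: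
for `0 ≤ x ≤ λ_min(ρ)`, `1 − β_x(ρ‖σ) = x·exp(−D_{−∞}(ρ‖σ))` where
`D_{−∞}(ρ‖σ) = −ln λ_max(ρ^{-1/2}σρ^{-1/2})`. -/
theorem one_sub_betaErr_eq {d : ℕ} (hd : 0 < d) (ρ σ : Matrix (Fin d) (Fin d) ℂ)
    (hρ : ρ.PosDef) (hσ : σ.PosDef) (hρtr : ρ.trace = 1) (hσtr : σ.trace = 1)
    (hM : (hrpow ρ (-(1 / 2)) * σ * hrpow ρ (-(1 / 2))).IsHermitian)
    (hnd : ∃! i : Fin d, hM.eigenvalues i = ⨆ j, hM.eigenvalues j)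
    (x : ℝ) (hx0 : 0 ≤ x) (hx : x ≤ lamMin ρ) :
    1 - betaErr x ρ σ =
      x * Real.exp (-(-(Real.log (lamMax (hrpow ρ (-(1 / 2)) * σ * hrpow ρ (-(1 / 2))))))) :=
  one_sub_betaErr_eq_general hd ρ σ hρ hσ hρtr hσtr x hx0 hx
end

section
/- Let {f_n} be a sequence of functions from a compact interval [a,b] to ℝ, each monotone (all non-decreasing, or all non-increasing), converging pointwise to a continuous function f. Then the convergence f_n → f is uniform on [a,b]. -/
open Filter Set Metric Topology

/-!
Each `f n` maps `[p, q]` into the interval between `f n p` and `f n q`. Around a point `x`,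
choose `[p, q]` so small that `g` varies little on it; convergence at the two endpoints alone
then controls `f n` on all of `[p, q]`. This gives locally uniform convergence, which on the
compact interval `[a, b]` is uniform convergence.
-/

lemma mem_uIcc_of_monotoneOn_or_antitoneOn {α β : Type*} [Preorder α] [LinearOrder β]
    {f : α → β} {s : Set α} (hf : MonotoneOn f s ∨ AntitoneOn f s) {x y z : α}
    (hx : x ∈ s) (hy : y ∈ s) (hz : z ∈ s) (hxz : x ≤ z) (hzy : z ≤ y) :
    f z ∈ uIcc (f x) (f y) := by
  rcases hf with hf | hf
  · exact Icc_subset_uIcc ⟨hf hx hz hxz, hf hz hy hzy⟩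
  · exact Icc_subset_uIcc' ⟨hf hz hy hzy, hf hx hz hxz⟩

lemma Real.dist_lt_of_mem_uIcc {c u v w ε : ℝ} (hw : w ∈ uIcc u v) (hu : dist u c < ε)
    (hv : dist v c < ε) : dist w c < ε := by
  have : (ball c ε).OrdConnected := by rw [Real.ball_eq_Ioo]; exact ordConnected_Ioo
  exact this.uIcc_subset hu hv hw

lemma Real.Icc_inter_closedBall (a b x r : ℝ) :
    Icc a b ∩ closedBall x r = Icc (max a (x - r)) (min b (x + r)) := by
  rw [Real.closedBall_eq_Icc, Icc_inter_Icc]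

theorem tendstoLocallyUniformlyOn_Icc_of_monotoneOn_or_antitoneOn {ι : Type*} {l : Filter ι}
    {f : ι → ℝ → ℝ} {g : ℝ → ℝ} {a b : ℝ}
    (hf : ∀ n, MonotoneOn (f n) (Icc a b) ∨ AntitoneOn (f n) (Icc a b))
    (hg : ContinuousOn g (Icc a b))
    (hfg : ∀ x ∈ Icc a b, Tendsto (fun n => f n x) l (𝓝 (g x))) :
    TendstoLocallyUniformlyOn f g l (Icc a b) := by
  refine Metric.tendstoLocallyUniformlyOn_iff.2 fun ε hε x hx => ?_
  obtain ⟨δ, hδ, hgδ⟩ := Metric.continuousOn_iff.1 hg x hx (ε / 3) (by positivity)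
  set t := Icc a b ∩ closedBall x (δ / 2) with ht
  have hxt : x ∈ t := ⟨hx, mem_closedBall_self (by positivity)⟩
  have hg_near : ∀ y ∈ t, dist (g y) (g x) < ε / 3 := fun y hy =>
    hgδ y hy.1 ((mem_closedBall.1 hy.2).trans_lt (half_lt_self hδ))
  rw [Real.Icc_inter_closedBall] at ht
  set p := max a (x - δ / 2)
  set q := min b (x + δ / 2)
  have hpq : p ≤ q := nonempty_Icc.1 ⟨x, ht ▸ hxt⟩
  have hpt : p ∈ t := ht ▸ left_mem_Icc.2 hpq
  have hqt : q ∈ t := ht ▸ right_mem_Icc.2 hpq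
  refine ⟨t, inter_mem_nhdsWithin _ (closedBall_mem_nhds x (by positivity)), ?_⟩
  filter_upwards [Metric.tendsto_nhds.1 (hfg p hpt.1) (ε / 3) (by positivity),
    Metric.tendsto_nhds.1 (hfg q hqt.1) (ε / 3) (by positivity)] with n hnp hnq y hy
  have hy' : y ∈ Icc p q := ht ▸ hy
  have hfy : dist (f n y) (g x) < 2 * ε / 3 := by
    refine Real.dist_lt_of_mem_uIcc
      (mem_uIcc_of_monotoneOn_or_antitoneOn (hf n) hpt.1 hqt.1 hy.1 hy'.1 hy'.2) ?_ ?_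
    · linarith [dist_triangle (f n p) (g p) (g x), hg_near p hpt]
    · linarith [dist_triangle (f n q) (g q) (g x), hg_near q hqt]
  calc dist (g y) (f n y) ≤ dist (g y) (g x) + dist (f n y) (g x) := dist_triangle_right _ _ _
    _ < ε := by linarith [hg_near y hy]

theorem tendstoUniformlyOn_of_monotone_general (a b : ℝ)
    (f : ℕ → ℝ → ℝ) (g : ℝ → ℝ)
    (hmono : (∀ n, MonotoneOn (f n) (Set.Icc a b)) ∨ (∀ n, AntitoneOn (f n) (Set.Icc a b)))
    (hcont : ContinuousOn g (Set.Icc a b))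
    (hpt : ∀ x ∈ Set.Icc a b, Tendsto (fun n => f n x) atTop (nhds (g x))) :
    TendstoUniformlyOn f g atTop (Set.Icc a b) := by
  have hmono' n : MonotoneOn (f n) (Icc a b) ∨ AntitoneOn (f n) (Icc a b) :=
    hmono.imp (· n) (· n)
  exact (tendstoLocallyUniformlyOn_iff_tendstoUniformlyOn_of_compact isCompact_Icc).1
    (tendstoLocallyUniformlyOn_Icc_of_monotoneOn_or_antitoneOn hmono' hcont hpt)

/-- Pointwise convergence of monotone functions on a compact interval to a continuous
limit is uniform. -/
theorem tendstoUniformlyOn_of_monotone (a b : ℝ) (hab : a ≤ b)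
    (f : ℕ → ℝ → ℝ) (g : ℝ → ℝ)
    (hmono : (∀ n, MonotoneOn (f n) (Set.Icc a b)) ∨ (∀ n, AntitoneOn (f n) (Set.Icc a b)))
    (hcont : ContinuousOn g (Set.Icc a b))
    (hpt : ∀ x ∈ Set.Icc a b, Tendsto (fun n => f n x) atTop (nhds (g x))) :
    TendstoUniformlyOn f g atTop (Set.Icc a b) :=
  tendstoUniformlyOn_of_monotone_general a b f g hmono hcont hpt
end
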